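/- arXiv:1508.00246 — 3 statements merged into one kernel-verified Lean document; each statement's English description precedes it below -/
import Mathlib

section
/- Representation of IWCE via the derivative of the weight function (equation (1.12), first form): if φ is continuously differentiable on [t₁,t₂] with derivative φ′, then IWCE(t₁,t₂) = φ(t₁)·Ē_X(t₁,t₂) + ∫_{t₁}^{t₂} φ′(x)·B̄_X(x,t₂) dx, where Ē_X(t₁,t₂) = −∫_{t₁}^{t₂} (F(y)/(F(t₂)−F(t₁)))·log(F(y)/(F(t₂)−F(t₁))) dy is the interval cumulative past entropy and B̄_X(x,t₂) = −∫_x^{t₂} (F(y)/(F(t₂)−F(t₁)))·log(F(y)/(F(t₂)−F(t₁))) dy. -/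
open MeasureTheory intervalIntegral

/-- Equation (1.12), first form: representation of the IWCE via the derivative of
the weight function, where Ē_X(t₁,t₂) is the interval cumulative past entropy and
B̄_X(x,t₂) = −∫_x^{t₂} (F(y)/(F(t₂)−F(t₁)))·log(F(y)/(F(t₂)−F(t₁))) dy. -/
theorem iwce_derivative_representation
    (f φ φ' F : ℝ → ℝ)
    (hf_meas : Measurable f) (hf_nonneg : ∀ x, 0 ≤ f x)
    (hφ_nonneg : ∀ x, 0 ≤ φ x)
    (hF : ∀ x, F x = ∫ s in (0:ℝ)..x, f s)
    (t₁ t₂ : ℝ) (ht₁ : 0 ≤ t₁) (ht : t₁ < t₂)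
    (hF0 : 0 < F t₁) (hF12 : F t₁ < F t₂) (hF1 : F t₂ < 1)
    (hφ_deriv : ∀ x ∈ Set.Icc t₁ t₂, HasDerivAt φ (φ' x) x)
    (hφ'_cont : ContinuousOn φ' (Set.Icc t₁ t₂))
    (hi1 : IntervalIntegrable
      (fun x => φ x * (F x / (F t₂ - F t₁)) *
        Real.log (F x / (F t₂ - F t₁))) volume t₁ t₂)
    (hi2 : IntervalIntegrable
      (fun y => (F y / (F t₂ - F t₁)) * Real.log (F y / (F t₂ - F t₁))) volume t₁ t₂)
    (hi3 : IntervalIntegrable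
      (fun x => φ' x *
        (-∫ y in x..t₂, (F y / (F t₂ - F t₁)) * Real.log (F y / (F t₂ - F t₁))))
      volume t₁ t₂) :
    -∫ x in t₁..t₂, φ x * (F x / (F t₂ - F t₁)) * Real.log (F x / (F t₂ - F t₁))
      = φ t₁ *
          (-∫ y in t₁..t₂, (F y / (F t₂ - F t₁)) * Real.log (F y / (F t₂ - F t₁)))
        + ∫ x in t₁..t₂, φ' x *
            (-∫ y in x..t₂, (F y / (F t₂ - F t₁)) *
              Real.log (F y / (F t₂ - F t₁))) := by
  have hle : t₁ ≤ t₂ := ht.le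
  have ht₂ : (0:ℝ) ≤ t₂ := ht₁.trans hle
  have huIcc : Set.uIcc t₁ t₂ = Set.Icc t₁ t₂ := Set.uIcc_of_le hle
  set Δ := F t₂ - F t₁ with hΔdef
  have hΔ : 0 < Δ := sub_pos.2 hF12
  -- f is integrable on (0, t₂]
  have hFt₂ : F t₂ = ∫ s in Set.Ioc 0 t₂, f s := by
    rw [hF, intervalIntegral.integral_of_le ht₂]
  have hfint : IntegrableOn f (Set.Ioc 0 t₂) := by
    by_contra h
    rw [MeasureTheory.integral_undef h] at hFt₂
    linarith
  -- F is continuous on [0, t₂]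
  have hFcont : ContinuousOn F (Set.Icc 0 t₂) := by
    have h1 : IntegrableOn f (Set.Icc 0 t₂) := by
      rwa [integrableOn_Icc_iff_integrableOn_Ioc]
    have h2 := intervalIntegral.continuousOn_primitive (f := f) (a := 0) (b := t₂)
      (μ := volume) h1
    refine h2.congr ?_
    intro x hx
    rw [hF, intervalIntegral.integral_of_le hx.1]
  -- F is bounded below by F t₁ on [t₁, t₂]
  have hFmono : ∀ x ∈ Set.Icc t₁ t₂, F t₁ ≤ F x := by
    intro x hx
    have hx0 : (0:ℝ) ≤ x := ht₁.trans hx.1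
    rw [hF, hF, intervalIntegral.integral_of_le ht₁, intervalIntegral.integral_of_le hx0]
    refine MeasureTheory.setIntegral_mono_set
      (hfint.mono_set (Set.Ioc_subset_Ioc_right hx.2))
      (Filter.Eventually.of_forall fun y => hf_nonneg y)
      (HasSubset.Subset.eventuallyLE (Set.Ioc_subset_Ioc_right hx.1))
  -- the clamp map
  set c : ℝ → ℝ := fun y => max t₁ (min y t₂) with hc
  have hc_cont : Continuous c := continuous_const.max (continuous_id.min continuous_const)
  have hc_mem : ∀ y, c y ∈ Set.Icc t₁ t₂ := fun y =>
    ⟨le_max_left _ _, max_le hle (min_le_right _ _)⟩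
  have hc_id : ∀ y ∈ Set.Icc t₁ t₂, c y = y := by
    intro y hy
    simp only [hc]
    rw [min_eq_left hy.2, max_eq_right hy.1]
  -- the entropy integrand, continuous on [t₁, t₂]
  set h : ℝ → ℝ := fun z => (F z / Δ) * Real.log (F z / Δ) with hhdef
  have hsub : Set.Icc t₁ t₂ ⊆ Set.Icc 0 t₂ := Set.Icc_subset_Icc_left ht₁
  have hFc : ContinuousOn F (Set.Icc t₁ t₂) := hFcont.mono hsub
  have hFpos : ∀ z ∈ Set.Icc t₁ t₂, F z / Δ ≠ 0 := fun z hz =>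
    ne_of_gt (div_pos (lt_of_lt_of_le hF0 (hFmono z hz)) hΔ)
  have hhcont : ContinuousOn h (Set.Icc t₁ t₂) :=
    (hFc.div_const Δ).mul ((hFc.div_const Δ).log hFpos)
  -- the continuous extension g̃ = h ∘ c
  set g : ℝ → ℝ := fun y => h (c y) with hg
  have hgcont : Continuous g := hhcont.comp_continuous hc_cont hc_mem
  have hEq : Set.EqOn (fun y => (F y / Δ) * Real.log (F y / Δ)) g (Set.Icc t₁ t₂) := by
    intro y hy
    simp only [hg, hc_id y hy, hhdef]
  -- the primitive v
  set v : ℝ → ℝ := fun x => ∫ y in t₁..x, g y with hv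
  have hvderiv : ∀ x, HasDerivAt v (g x) x := fun x =>
    (hgcont.integral_hasStrictDerivAt t₁ x).hasDerivAt
  have hvcont : Continuous v := by
    rw [continuous_iff_continuousAt]
    exact fun x => (hvderiv x).continuousAt
  -- B̄ vs v
  have hB : ∀ x ∈ Set.Icc t₁ t₂,
      (∫ y in x..t₂, (F y / Δ) * Real.log (F y / Δ)) = v t₂ - v x := by
    intro x hx
    have hsub2 : Set.uIcc x t₂ ⊆ Set.Icc t₁ t₂ := by
      rw [Set.uIcc_of_le hx.2]
      exact Set.Icc_subset_Icc_left hx.1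
    rw [intervalIntegral.integral_congr (hEq.mono hsub2)]
    rw [hv]
    exact (intervalIntegral.integral_interval_sub_left
      (hgcont.intervalIntegrable t₁ t₂) (hgcont.intervalIntegrable t₁ x)).symm
  -- integration by parts
  have hφd : ∀ x ∈ Set.uIcc t₁ t₂, HasDerivAt φ (φ' x) x := by
    rw [huIcc]; exact hφ_deriv
  have hφ'int : IntervalIntegrable φ' volume t₁ t₂ := by
    apply ContinuousOn.intervalIntegrable
    rwa [huIcc]
  have hvd : ∀ x ∈ Set.uIcc t₁ t₂, HasDerivAt v (g x) x := fun x _ => hvderiv x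
  have hparts := intervalIntegral.integral_mul_deriv_eq_deriv_mul hφd hvd hφ'int
    (hgcont.intervalIntegrable t₁ t₂)
  -- FTC for φ
  have hφFTC : (∫ x in t₁..t₂, φ' x) = φ t₂ - φ t₁ :=
    intervalIntegral.integral_eq_sub_of_hasDerivAt hφd hφ'int
  -- rewrite LHS of goal
  have hLHS : (∫ x in t₁..t₂, φ x * (F x / Δ) * Real.log (F x / Δ))
      = ∫ x in t₁..t₂, φ x * g x := by
    apply intervalIntegral.integral_congr
    intro x hx
    rw [huIcc] at hx
    simp only [mul_assoc]
    rw [show (F x / Δ) * Real.log (F x / Δ) = g x from hEq hx]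
  -- rewrite the second term of RHS
  have hRHS2 : (∫ x in t₁..t₂, φ' x *
        (-∫ y in x..t₂, (F y / Δ) * Real.log (F y / Δ)))
      = (∫ x in t₁..t₂, φ' x * v x) - (φ t₂ - φ t₁) * v t₂ := by
    have h1 : (∫ x in t₁..t₂, φ' x *
          (-∫ y in x..t₂, (F y / Δ) * Real.log (F y / Δ)))
        = ∫ x in t₁..t₂, (φ' x * v x - φ' x * v t₂) := by
      apply intervalIntegral.integral_congr
      intro x hx
      rw [huIcc] at hx
      dsimp only
      rw [hB x hx]
      ring
    rw [h1]
    have hint1 : IntervalIntegrable (fun x => φ' x * v x) volume t₁ t₂ := by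
      apply ContinuousOn.intervalIntegrable
      rw [huIcc]
      exact hφ'_cont.mul hvcont.continuousOn
    have hint2 : IntervalIntegrable (fun x => φ' x * v t₂) volume t₁ t₂ :=
      hφ'int.mul_const _
    rw [intervalIntegral.integral_sub hint1 hint2,
      intervalIntegral.integral_mul_const, hφFTC]
  -- first term of RHS
  have hRHS1 : (∫ y in t₁..t₂, (F y / Δ) * Real.log (F y / Δ)) = v t₂ - v t₁ :=
    hB t₁ ⟨le_refl _, hle⟩
  rw [hLHS, hRHS1, hRHS2]
  -- conclude with the parts identity
  rw [hparts]
  ring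
end

section
/- Theorem 2.2 (upper bound for IWCE): with η(x) = (1/F(x))·∫₀ˣ φ(y)·F(y) dy for x > 0, one has IWCE(t₁,t₂) ≤ E[η(X) | t₁ ≤ X ≤ t₂]. -/
/-!
Put `Δ = F t₂ - F t₁ ≤ F t₂`. The function `log ∘ F` is absolutely continuous with derivative
`f / F`, so `-log (F x / Δ) ≤ log (F t₂) - log (F x) = ∫ z in x..t₂, f z / F z`.
Multiplying by `φ x * F x / Δ`, integrating, and exchanging the order of integration over the
triangle `t₁ ≤ x ≤ z ≤ t₂` (an integration by parts) bounds the entropy by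
`Δ⁻¹ * ∫ z in t₁..t₂, f z / F z * ∫ x in t₁..z, φ x * F x`, and finally
`∫ x in t₁..z, φ x * F x ≤ ∫ x in 0..z, φ x * F x = F z * η z`.
-/

open MeasureTheory intervalIntegral Set
open scoped NNReal

theorem LipschitzOnWith.comp_absolutelyContinuousOnInterval {X Y : Type*} [PseudoMetricSpace X]
    [PseudoMetricSpace Y] {g : X → Y} {f : ℝ → X} {K : ℝ≥0} {s : Set X} {a b : ℝ}
    (hg : LipschitzOnWith K g s) (hf : AbsolutelyContinuousOnInterval f a b)
    (hfs : MapsTo f (uIcc a b) s) : AbsolutelyContinuousOnInterval (g ∘ f) a b := by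
  rw [absolutelyContinuousOnInterval_iff] at hf ⊢
  intro ε hε
  obtain ⟨δ, hδ, hfδ⟩ := hf (ε / (K + 1)) (by positivity)
  refine ⟨δ, hδ, fun E hE hEδ ↦ ?_⟩
  calc ∑ i ∈ Finset.range E.1, dist ((g ∘ f) (E.2 i).1) ((g ∘ f) (E.2 i).2)
      ≤ ∑ i ∈ Finset.range E.1, K * dist (f (E.2 i).1) (f (E.2 i).2) := by
        gcongr with i hi
        exact hg.dist_le_mul _ (hfs (hE.1 i hi).1) _ (hfs (hE.1 i hi).2)
    _ = K * ∑ i ∈ Finset.range E.1, dist (f (E.2 i).1) (f (E.2 i).2) := by rw [Finset.mul_sum]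
    _ ≤ K * (ε / (K + 1)) := by gcongr; exact (hfδ E hE hEδ).le
    _ < (K + 1) * (ε / (K + 1)) := by gcongr; linarith
    _ = ε := by field_simp

theorem Real.lipschitzOnWith_log_Ici {c : ℝ} (hc : 0 < c) :
    LipschitzOnWith (Real.toNNReal c⁻¹) Real.log (Ici c) := by
  refine (convex_Ici c).lipschitzOnWith_of_nnnorm_hasDerivWithin_le
    (fun x hx ↦ (Real.hasDerivAt_log (hc.trans_le hx).ne').hasDerivWithinAt) fun x hx ↦ ?_
  rw [← NNReal.coe_le_coe, coe_nnnorm, Real.norm_eq_abs, Real.coe_toNNReal _ (by positivity),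
    abs_inv, abs_of_pos (hc.trans_le hx)]
  exact inv_anti₀ hc hx

namespace AbsolutelyContinuousOnInterval

variable {G g : ℝ → ℝ} {a b : ℝ}

theorem log (hG : AbsolutelyContinuousOnInterval G a b) (hpos : ∀ x ∈ uIcc a b, 0 < G x) :
    AbsolutelyContinuousOnInterval (fun x ↦ Real.log (G x)) a b := by
  obtain ⟨m, hm, hmin⟩ := isCompact_uIcc.exists_isMinOn nonempty_uIcc hG.continuousOn
  exact (Real.lipschitzOnWith_log_Ici (hpos m hm)).comp_absolutelyContinuousOnInterval hG
    fun x hx ↦ hmin hx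

theorem integral_div_eq_log_sub (hG : AbsolutelyContinuousOnInterval G a b)
    (hpos : ∀ x ∈ uIcc a b, 0 < G x) (hderiv : ∀ᵐ x, x ∈ uIcc a b → HasDerivAt G (g x) x) :
    ∫ x in a..b, g x / G x = Real.log (G b) - Real.log (G a) := by
  rw [← (hG.log hpos).integral_deriv_eq_sub]
  refine integral_congr_ae ?_
  filter_upwards [hderiv] with x hx hxab
  have hx' := uIoc_subset_uIcc hxab
  exact ((hx hx').log (hpos x hx').ne').deriv.symm

end AbsolutelyContinuousOnInterval

theorem integral_div_primitive_eq_log_sub {f G : ℝ → ℝ} {c b x : ℝ}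
    (hG : ∀ y, G y = ∫ t in c..y, f t) (hf : IntervalIntegrable f volume c b)
    (hx : x ∈ uIcc c b) (hpos : ∀ y ∈ uIcc x b, 0 < G y) :
    ∫ z in x..b, f z / G z = Real.log (G b) - Real.log (G x) := by
  obtain rfl : G = fun y ↦ ∫ t in c..y, f t := funext hG
  have hsub : uIcc x b ⊆ uIcc c b := uIcc_subset_uIcc_right hx
  refine ((hf.absolutelyContinuousOnInterval_intervalIntegral left_mem_uIcc).mono hsub)
    |>.integral_div_eq_log_sub hpos ?_
  filter_upwards [hf.ae_hasDerivAt_integral] with y hy hyx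
  exact hy (hsub hyx) c left_mem_uIcc

theorem IntervalIntegrable.div_continuousOn {f g : ℝ → ℝ} {a b : ℝ}
    (hf : IntervalIntegrable f volume a b) (hg : ContinuousOn g (uIcc a b))
    (hg0 : ∀ x ∈ uIcc a b, g x ≠ 0) : IntervalIntegrable (fun x ↦ f x / g x) volume a b := by
  simpa only [div_eq_mul_inv, Pi.inv_apply] using hf.mul_continuousOn (hg.inv₀ hg0)

theorem integral_mul_integral_comm_triangle {p q : ℝ → ℝ} {a b : ℝ}
    (hp : IntervalIntegrable p volume a b) (hq : IntervalIntegrable q volume a b) :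
    ∫ x in a..b, p x * ∫ z in x..b, q z = ∫ z in a..b, q z * ∫ x in a..z, p x := by
  have hP := hp.absolutelyContinuousOnInterval_intervalIntegral left_mem_uIcc
  have hQ := hq.absolutelyContinuousOnInterval_intervalIntegral right_mem_uIcc
  have hdP : ∫ x in a..b, deriv (fun x ↦ ∫ t in a..x, p t) x * ∫ t in b..x, q t
      = ∫ x in a..b, p x * ∫ t in b..x, q t := by
    refine integral_congr_ae ?_
    filter_upwards [hp.ae_hasDerivAt_integral] with x hx hxab
    rw [(hx (uIoc_subset_uIcc hxab) a left_mem_uIcc).deriv]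
  have hdQ : ∫ x in a..b, (∫ t in a..x, p t) * deriv (fun x ↦ ∫ t in b..x, q t) x
      = ∫ x in a..b, q x * ∫ t in a..x, p t := by
    refine integral_congr_ae ?_
    filter_upwards [hq.ae_hasDerivAt_integral] with x hx hxab
    rw [(hx (uIoc_subset_uIcc hxab) b right_mem_uIcc).deriv, mul_comm]
  have hparts := hP.integral_mul_deriv_eq_deriv_mul hQ
  rw [hdP, hdQ] at hparts
  simp only [integral_same, mul_zero, zero_mul, sub_zero, zero_sub] at hparts
  have hsymm : ∀ x, ∫ z in x..b, q z = -∫ z in b..x, q z := fun x ↦ integral_symm _ _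
  simp only [hsymm, mul_neg, intervalIntegral.integral_neg]
  linarith

theorem neg_mul_div_mul_log_div_le {w y Δ G : ℝ} (hw : 0 ≤ w) (hy : 0 < y) (hΔ : 0 < Δ)
    (hΔG : Δ ≤ G) :
    -(w * (y / Δ) * Real.log (y / Δ)) ≤ Δ⁻¹ * (w * y * (Real.log G - Real.log y)) := by
  have hlog : Real.log Δ ≤ Real.log G := Real.log_le_log hΔ hΔG
  rw [Real.log_div hy.ne' hΔ.ne']
  calc -(w * (y / Δ) * (Real.log y - Real.log Δ))
      = Δ⁻¹ * (w * y * (Real.log Δ - Real.log y)) := by ring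
    _ ≤ Δ⁻¹ * (w * y * (Real.log G - Real.log y)) := by gcongr

section PositivePrimitive

variable {f φ F η : ℝ → ℝ} {t₁ t₂ : ℝ}

theorem intervalIntegrable_div_of_eq_primitive (hF : ∀ x, F x = ∫ s in (0:ℝ)..x, f s)
    (hFpos : ∀ x, 0 < x → 0 < F x) (ht₁ : 0 < t₁) (ht : t₁ ≤ t₂) :
    IntervalIntegrable (fun z ↦ f z / F z) volume t₁ t₂ := by
  have hf : IntervalIntegrable f volume 0 t₂ :=
    intervalIntegrable_of_integral_ne_zero (hF t₂ ▸ (hFpos t₂ (ht₁.trans_le ht)).ne')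
  have hsub := uIcc_subset_uIcc_right (mem_uIcc_of_le ht₁.le ht)
  refine (hf.mono_set hsub).div_continuousOn
    (((continuousOn_primitive_interval' hf left_mem_uIcc).mono hsub).congr fun x _ ↦ hF x)
    fun x hx ↦ (hFpos x ?_).ne'
  rw [uIcc_of_le ht] at hx
  exact ht₁.trans_le hx.1

theorem integral_div_eq_log_sub_log_of_eq_primitive (hF : ∀ x, F x = ∫ s in (0:ℝ)..x, f s)
    (hFpos : ∀ x, 0 < x → 0 < F x) (ht₁ : 0 < t₁) (ht : t₁ ≤ t₂) :
    ∫ z in t₁..t₂, f z / F z = Real.log (F t₂) - Real.log (F t₁) := by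
  refine integral_div_primitive_eq_log_sub hF
    (intervalIntegrable_of_integral_ne_zero (hF t₂ ▸ (hFpos t₂ (ht₁.trans_le ht)).ne'))
    (mem_uIcc_of_le ht₁.le ht) fun y hy ↦ hFpos y ?_
  rw [uIcc_of_le ht] at hy
  exact ht₁.trans_le hy.1

theorem intervalIntegrable_mul_integral_div_of_eq_primitive
    (hF : ∀ x, F x = ∫ s in (0:ℝ)..x, f s) (hFpos : ∀ x, 0 < x → 0 < F x)
    (hφF : IntervalIntegrable (fun x ↦ φ x * F x) volume 0 t₂) (ht₁ : 0 < t₁) (ht : t₁ ≤ t₂) :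
    IntervalIntegrable (fun x ↦ φ x * F x * ∫ z in x..t₂, f z / F z) volume t₁ t₂ :=
  (hφF.mono_set (uIcc_subset_uIcc_right (mem_uIcc_of_le ht₁.le ht))).mul_continuousOn
    (continuousOn_primitive_interval_left
      ((intervalIntegrable_iff').1 (intervalIntegrable_div_of_eq_primitive hF hFpos ht₁ ht)))

theorem integral_mul_integral_div_le_of_eq_primitive (hf : ∀ x, 0 ≤ f x) (hφ : ∀ x, 0 ≤ φ x)
    (hF : ∀ x, F x = ∫ s in (0:ℝ)..x, f s) (hFpos : ∀ x, 0 < x → 0 < F x)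
    (hη : ∀ x, 0 < x → η x = (1 / F x) * ∫ y in (0:ℝ)..x, φ y * F y)
    (hφF : IntervalIntegrable (fun x ↦ φ x * F x) volume 0 t₂)
    (hηf : IntervalIntegrable (fun x ↦ η x * f x) volume t₁ t₂) (ht₁ : 0 < t₁) (ht : t₁ ≤ t₂) :
    ∫ x in t₁..t₂, φ x * F x * ∫ z in x..t₂, f z / F z ≤ ∫ x in t₁..t₂, η x * f x := by
  have hp := hφF.mono_set (uIcc_subset_uIcc_right (mem_uIcc_of_le ht₁.le ht))
  have hq := intervalIntegrable_div_of_eq_primitive hF hFpos ht₁ ht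
  rw [integral_mul_integral_comm_triangle hp hq]
  refine integral_mono_on ht (hq.mul_continuousOn (continuousOn_primitive_interval' hp
    left_mem_uIcc)) hηf fun z hzt ↦ ?_
  have hz : 0 < z := ht₁.trans_le hzt.1
  have hφF_le : ∫ x in t₁..z, φ x * F x ≤ ∫ x in (0:ℝ)..z, φ x * F x :=
    integral_mono_interval ht₁.le hzt.1 le_rfl
      (ae_restrict_of_forall_mem measurableSet_Ioc fun y hy ↦
        mul_nonneg (hφ y) (hFpos y hy.1).le)
      (hφF.mono_set (uIcc_subset_uIcc_left (mem_uIcc_of_le hz.le hzt.2)))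
  calc f z / F z * ∫ x in t₁..z, φ x * F x ≤ f z / F z * ∫ x in (0:ℝ)..z, φ x * F x := by
        gcongr
        exact div_nonneg (hf z) (hFpos z hz).le
    _ = η z * f z := by rw [hη z hz]; ring

end PositivePrimitive

theorem iwce_upper_bound_general
    (f φ F η : ℝ → ℝ)
    (hf_nonneg : ∀ x, 0 ≤ f x)
    (hφ_nonneg : ∀ x, 0 ≤ φ x)
    (hF : ∀ x, F x = ∫ s in (0:ℝ)..x, f s)
    (hFpos : ∀ x, 0 < x → 0 < F x)
    (hη : ∀ x, 0 < x → η x = (1 / F x) * ∫ y in (0:ℝ)..x, φ y * F y)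
    (t₁ t₂ : ℝ) (ht₁ : 0 ≤ t₁) (ht : t₁ < t₂)
    (hF0 : 0 < F t₁) (hF12 : F t₁ < F t₂)
    (hi1 : IntervalIntegrable
      (fun x => φ x * (F x / (F t₂ - F t₁)) *
        Real.log (F x / (F t₂ - F t₁))) volume t₁ t₂)
    (hi2 : IntervalIntegrable (fun x => η x * f x) volume t₁ t₂)
    (hi3 : ∀ x, 0 < x → IntervalIntegrable (fun y => φ y * F y) volume 0 x) :
    -∫ x in t₁..t₂, φ x * (F x / (F t₂ - F t₁)) * Real.log (F x / (F t₂ - F t₁))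
      ≤ (∫ x in t₁..t₂, η x * f x) / (F t₂ - F t₁) := by
  set Δ := F t₂ - F t₁
  have hΔ : 0 < Δ := sub_pos.2 hF12
  have ht₁pos : 0 < t₁ := ht₁.lt_of_ne (by rintro rfl; simp [hF] at hF0)
  have hφF := hi3 t₂ (ht₁pos.trans ht)
  rw [← intervalIntegral.integral_neg, div_eq_inv_mul]
  calc ∫ x in t₁..t₂, -(φ x * (F x / Δ) * Real.log (F x / Δ))
      ≤ ∫ x in t₁..t₂, Δ⁻¹ * (φ x * F x * ∫ z in x..t₂, f z / F z) := by
        refine integral_mono_on ht.le hi1.neg ((intervalIntegrable_mul_integral_div_of_eq_primitive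
          hF hFpos hφF ht₁pos ht.le).const_mul _) fun x hx ↦ ?_
        have hx₀ : 0 < x := ht₁pos.trans_le hx.1
        rw [integral_div_eq_log_sub_log_of_eq_primitive hF hFpos hx₀ hx.2]
        exact neg_mul_div_mul_log_div_le (hφ_nonneg x) (hFpos x hx₀) hΔ (by linarith)
    _ = Δ⁻¹ * ∫ x in t₁..t₂, φ x * F x * ∫ z in x..t₂, f z / F z :=
        intervalIntegral.integral_const_mul _ _
    _ ≤ Δ⁻¹ * ∫ x in t₁..t₂, η x * f x := by
        gcongr
        exact integral_mul_integral_div_le_of_eq_primitive hf_nonneg hφ_nonneg hF hFpos hη hφF hi2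
          ht₁pos ht.le

/-- Theorem 2.2: upper bound for the IWCE by the conditional expectation of
η(X) = (1/F(X))·∫₀^X φ(y)·F(y) dy given t₁ ≤ X ≤ t₂. -/
theorem iwce_upper_bound
    (f φ F η : ℝ → ℝ)
    (hf_meas : Measurable f) (hf_nonneg : ∀ x, 0 ≤ f x)
    (hφ_meas : Measurable φ) (hφ_nonneg : ∀ x, 0 ≤ φ x)
    (hF : ∀ x, F x = ∫ s in (0:ℝ)..x, f s)
    (hFpos : ∀ x, 0 < x → 0 < F x)
    (hη : ∀ x, 0 < x → η x = (1 / F x) * ∫ y in (0:ℝ)..x, φ y * F y)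
    (t₁ t₂ : ℝ) (ht₁ : 0 ≤ t₁) (ht : t₁ < t₂)
    (hF0 : 0 < F t₁) (hF12 : F t₁ < F t₂) (hF1 : F t₂ < 1)
    (hi1 : IntervalIntegrable
      (fun x => φ x * (F x / (F t₂ - F t₁)) *
        Real.log (F x / (F t₂ - F t₁))) volume t₁ t₂)
    (hi2 : IntervalIntegrable (fun x => η x * f x) volume t₁ t₂)
    (hi3 : ∀ x, 0 < x → IntervalIntegrable (fun y => φ y * F y) volume 0 x) :
    -∫ x in t₁..t₂, φ x * (F x / (F t₂ - F t₁)) * Real.log (F x / (F t₂ - F t₁))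
      ≤ (∫ x in t₁..t₂, η x * f x) / (F t₂ - F t₁) :=
  iwce_upper_bound_general f φ F η hf_nonneg hφ_nonneg hF hFpos hη t₁ t₂ ht₁ ht hF0 hF12 hi1 hi2 hi3
end

section
/- Upper bound for IWCRE (residual analogue of Theorem 2.2): with η̄(x) = (1/F̄(x))·∫_x^∞ φ(y)·F̄(y) dy for x with F̄(x) > 0, one has IWCRE(t₁,t₂) ≤ E[η̄(X) | t₁ ≤ X ≤ t₂]. -/
/-!
Put `Δ = F̄ t₁ - F̄ t₂ ≤ F̄ t₁`. Since `-log F̄` grows at most like the integral of the hazard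
rate `f / F̄`, we have `log Δ - log F̄ x ≤ ∫ s in t₁..x, f s / F̄ s` on `[t₁, t₂]`, so
`Δ · IWCRE ≤ ∫ x in t₁..t₂, φ x F̄ x ∫ s in t₁..x, f s / F̄ s`. Exchanging the order of
integration turns this into `∫ s in t₁..t₂, (f s / F̄ s) ∫ x in s..t₂, φ x F̄ x`, and enlarging
the inner integral to `(s, ∞)` gives `∫ η̄ f`.

The hazard bound needs no differentiation of `F̄`: on `[y, z]`, `log (F̄ y / F̄ z)` is at most
`(F̄ y - F̄ z) / F̄ z` while the hazard integral is at least `(F̄ y - F̄ z) / F̄ y`, so the defect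
is quadratic in `F̄ y - F̄ z`, and repeatedly bisecting the range of the continuous `F̄` drives
it to zero.
-/

open MeasureTheory intervalIntegral Set Filter Real

theorem le_of_sub_le_mul_sq {G H : ℝ → ℝ} {a b C : ℝ} (hab : a ≤ b)
    (hG : ContinuousOn G (Icc a b))
    (hH : ∀ x ∈ Icc a b, ∀ y ∈ Icc a b, x ≤ y → H x - H y ≤ C * (G y - G x) ^ 2) :
    H a ≤ H b := by
  have bisect : ∀ n : ℕ, ∀ x ∈ Icc a b, ∀ y ∈ Icc a b, x ≤ y →
      H x - H y ≤ C * (G y - G x) ^ 2 / 2 ^ n := by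
    intro n
    induction n with
    | zero => simpa using hH
    | succ n ih =>
      intro x hx y hy hxy
      have hsub : Icc x y ⊆ Icc a b := Icc_subset_Icc hx.1 hy.2
      obtain ⟨m, hm, hGm⟩ : (G x + G y) / 2 ∈ G '' Icc x y := by
        rw [← uIcc_of_le hxy]
        refine intermediate_value_uIcc (hG.mono (uIcc_of_le hxy ▸ hsub)) ?_
        rw [mem_uIcc]
        rcases le_total (G x) (G y) with h | h
        · exact Or.inl ⟨by linarith, by linarith⟩
        · exact Or.inr ⟨by linarith, by linarith⟩
      have h₁ := ih x hx m (hsub hm) hm.1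
      have h₂ := ih m (hsub hm) y hy hm.2
      rw [hGm] at h₁ h₂
      calc H x - H y = (H x - H m) + (H m - H y) := by ring
        _ ≤ C * ((G x + G y) / 2 - G x) ^ 2 / 2 ^ n + C * (G y - (G x + G y) / 2) ^ 2 / 2 ^ n :=
          add_le_add h₁ h₂
        _ = C * (G y - G x) ^ 2 / 2 ^ (n + 1) := by ring
  have hlim : Tendsto (fun n : ℕ => C * (G b - G a) ^ 2 / 2 ^ n) atTop (nhds 0) :=
    tendsto_const_nhds.div_atTop (tendsto_pow_atTop_atTop_of_one_lt one_lt_two)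
  have := ge_of_tendsto' hlim fun n => bisect n a (left_mem_Icc.2 hab) b (right_mem_Icc.2 hab) hab
  linarith

theorem integral_mul_primitive_eq_integral_mul_tail {w g : ℝ → ℝ} {a b : ℝ} (hab : a ≤ b)
    (hw : IntervalIntegrable w volume a b) (hg : IntervalIntegrable g volume a b) :
    ∫ y in a..b, w y * ∫ x in a..y, g x = ∫ x in a..b, g x * ∫ y in x..b, w y := by
  rw [intervalIntegrable_iff_integrableOn_Ioc_of_le hab] at hw hg
  set T : ℝ × ℝ → ℝ := {p | p.2 ≤ p.1}.indicator fun p => w p.1 * g p.2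
  have hT : Integrable T ((volume.restrict (Ioc a b)).prod (volume.restrict (Ioc a b))) :=
    (hw.mul_prod hg).indicator (measurableSet_le measurable_snd measurable_fst)
  have hrow : ∀ y ∈ Ioc a b, ∫ x in Ioc a b, T (y, x) = w y * ∫ x in a..y, g x := by
    intro y hy
    have : (fun x => T (y, x)) = (Iic y).indicator fun x => w y * g x := by
      ext x; simp [T, indicator_apply]
    rw [this, MeasureTheory.integral_indicator measurableSet_Iic,
      Measure.restrict_restrict measurableSet_Iic, Iic_inter_Ioc_of_le hy.2,
      MeasureTheory.integral_const_mul, integral_of_le hy.1.le]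
  have hcol : ∀ x ∈ Ioc a b, ∫ y in Ioc a b, T (y, x) = g x * ∫ y in x..b, w y := by
    intro x hx
    have : (fun y => T (y, x)) = (Ici x).indicator fun y => w y * g x := by
      ext y; simp [T, indicator_apply]
    have hset : Ici x ∩ Ioc a b = Icc x b := by
      ext y
      simp only [mem_inter_iff, mem_Ici, mem_Ioc, mem_Icc]
      exact ⟨fun h => ⟨h.1, h.2.2⟩, fun h => ⟨h.1, hx.1.trans_le h.1, h.2⟩⟩
    rw [this, MeasureTheory.integral_indicator measurableSet_Ici,
      Measure.restrict_restrict measurableSet_Ici, hset, MeasureTheory.integral_mul_const,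
      integral_Icc_eq_integral_Ioc, integral_of_le hx.2, mul_comm]
  rw [integral_of_le hab, integral_of_le hab, ← setIntegral_congr_fun measurableSet_Ioc hrow,
    ← setIntegral_congr_fun measurableSet_Ioc hcol]
  exact integral_integral_swap (f := fun y x => T (y, x)) hT

theorem intervalIntegrable_of_integral_lt_integral {f : ℝ → ℝ} {a b c : ℝ} (hab : a ≤ b)
    (hf_nonneg : ∀ x ∈ Icc a b, 0 ≤ f x) (h : ∫ x in a..b, f x < ∫ x in a..c, f x) :
    IntervalIntegrable f volume a c := by
  by_contra hf
  rw [integral_undef hf] at h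
  linarith [integral_nonneg (μ := volume) hab hf_nonneg]

theorem intervalIntegral_le_integral_Ioi {w : ℝ → ℝ} {a b : ℝ} (hab : a ≤ b)
    (hw : IntegrableOn w (Ioi a)) (hw_nonneg : ∀ x ∈ Ioi a, 0 ≤ w x) :
    ∫ x in a..b, w x ≤ ∫ x in Ioi a, w x := by
  rw [integral_of_le hab]
  exact setIntegral_mono_set hw (ae_restrict_of_forall_mem measurableSet_Ioi hw_nonneg)
    Ioc_subset_Ioi_self.eventuallyLE

section Survival

variable {f S : ℝ → ℝ} {a b : ℝ}

theorem sub_eq_integral_of_eq_sub_primitive {c : ℝ} (hf : IntervalIntegrable f volume a b)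
    (hS : ∀ x, S x = c - ∫ t in a..x, f t) :
    ∀ x ∈ Icc a b, ∀ y ∈ Icc a b, S x - S y = ∫ t in x..y, f t := fun x hx y hy => by
  rw [hS, hS, ← integral_interval_sub_left (hf.mono_set (uIcc_subset_uIcc_left
    (Icc_subset_uIcc hy))) (hf.mono_set (uIcc_subset_uIcc_left (Icc_subset_uIcc hx)))]
  ring

theorem continuousOn_of_sub_eq_integral (hf : IntervalIntegrable f volume a b)
    (hS : ∀ x ∈ Icc a b, ∀ y ∈ Icc a b, S x - S y = ∫ t in x..y, f t) :
    ContinuousOn S (Icc a b) := by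
  refine ((continuousOn_const (c := S a)).sub
    ((continuousOn_primitive_interval' hf left_mem_uIcc).mono Icc_subset_uIcc)).congr fun x hx => ?_
  simp only [Pi.sub_apply]
  linarith [hS a ⟨le_rfl, hx.1.trans hx.2⟩ x hx]

theorem antitoneOn_of_sub_eq_integral (hf_nonneg : ∀ x ∈ Icc a b, 0 ≤ f x)
    (hS : ∀ x ∈ Icc a b, ∀ y ∈ Icc a b, S x - S y = ∫ t in x..y, f t) :
    AntitoneOn S (Icc a b) := fun x hx y hy hxy => by
  have := integral_nonneg (μ := volume) hxy fun t ht =>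
    hf_nonneg t ⟨hx.1.trans ht.1, ht.2.trans hy.2⟩
  linarith [hS x hx y hy]

theorem intervalIntegrable_div_of_sub_eq_integral (hf : IntervalIntegrable f volume a b)
    (hS : ∀ x ∈ Icc a b, ∀ y ∈ Icc a b, S x - S y = ∫ t in x..y, f t)
    (hpos : ∀ x ∈ Icc a b, 0 < S x) (hab : a ≤ b) :
    IntervalIntegrable (fun t => f t / S t) volume a b := by
  simpa only [div_eq_mul_inv, Pi.inv_apply] using hf.mul_continuousOn
    (((continuousOn_of_sub_eq_integral hf hS).inv₀ fun t ht => (hpos t ht).ne').mono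
      (uIcc_of_le hab).subset)

theorem log_sub_log_sub_integral_div_le (hf : IntervalIntegrable f volume a b)
    (hf_nonneg : ∀ x ∈ Icc a b, 0 ≤ f x)
    (hS : ∀ x ∈ Icc a b, ∀ y ∈ Icc a b, S x - S y = ∫ t in x..y, f t)
    (hpos : ∀ x ∈ Icc a b, 0 < S x) {y z : ℝ} (hy : y ∈ Icc a b) (hz : z ∈ Icc a b)
    (hyz : y ≤ z) :
    log (S y) - log (S z) - ∫ t in y..z, f t / S t ≤ (S b ^ 2)⁻¹ * (S z - S y) ^ 2 := by
  have hanti := antitoneOn_of_sub_eq_integral hf_nonneg hS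
  have hb : b ∈ Icc a b := ⟨hy.1.trans (hyz.trans hz.2), le_rfl⟩
  have hSy := hpos y hy
  have hSz := hpos z hz
  have hSzy : S z ≤ S y := hanti hy hz hyz
  have hSbz : S b ≤ S z := hanti hz hb hz.2
  have hsub : uIcc y z ⊆ uIcc a b := uIcc_subset_uIcc (Icc_subset_uIcc hy) (Icc_subset_uIcc hz)
  have hlog : log (S y) - log (S z) ≤ (S y - S z) / S z := by
    have := log_le_sub_one_of_pos (div_pos hSy hSz)
    rwa [log_div hSy.ne' hSz.ne', div_sub_one hSz.ne'] at this
  have hint : (S y - S z) / S y ≤ ∫ t in y..z, f t / S t := by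
    rw [hS y hy z hz, ← intervalIntegral.integral_div]
    refine integral_mono_on hyz ((hf.mono_set hsub).div_const _)
      ((intervalIntegrable_div_of_sub_eq_integral hf hS hpos hb.1).mono_set hsub) fun t ht => ?_
    have ht' : t ∈ Icc a b := ⟨hy.1.trans ht.1, ht.2.trans hz.2⟩
    exact div_le_div_of_nonneg_left (hf_nonneg t ht') (hpos t ht') (hanti hy ht' ht.1)
  have hsq : (S y - S z) / S z - (S y - S z) / S y ≤ (S b ^ 2)⁻¹ * (S z - S y) ^ 2 := by
    rw [div_sub_div _ _ hSz.ne' hSy.ne', ← div_eq_inv_mul]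
    calc ((S y - S z) * S y - S z * (S y - S z)) / (S z * S y)
        = (S z - S y) ^ 2 / (S z * S y) := by ring
      _ ≤ (S z - S y) ^ 2 / S b ^ 2 := by
        refine div_le_div_of_nonneg_left (sq_nonneg _) (pow_pos (hpos b hb) 2) ?_
        rw [sq]
        exact mul_le_mul hSbz (hSbz.trans hSzy) (hpos b hb).le hSz.le
  linarith

theorem log_sub_log_le_integral_div (hf : IntervalIntegrable f volume a b)
    (hf_nonneg : ∀ x ∈ Icc a b, 0 ≤ f x)
    (hS : ∀ x ∈ Icc a b, ∀ y ∈ Icc a b, S x - S y = ∫ t in x..y, f t)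
    (hpos : ∀ x ∈ Icc a b, 0 < S x) {x : ℝ} (hx : x ∈ Icc a b) :
    log (S a) - log (S x) ≤ ∫ t in a..x, f t / S t := by
  have hdiv := intervalIntegrable_div_of_sub_eq_integral hf hS hpos (hx.1.trans hx.2)
  have hsub : Icc a x ⊆ Icc a b := Icc_subset_Icc_right hx.2
  suffices log (S a) + ∫ t in a..a, f t / S t ≤ log (S x) + ∫ t in a..x, f t / S t by
    simp only [integral_same] at this; linarith
  refine le_of_sub_le_mul_sq (H := fun t => log (S t) + ∫ s in a..t, f s / S s)
    (C := (S b ^ 2)⁻¹) hx.1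
    ((continuousOn_of_sub_eq_integral hf hS).mono hsub) fun y hy z hz hyz => ?_
  have hsplit := integral_interval_sub_left
    (hdiv.mono_set (uIcc_subset_uIcc_left (Icc_subset_uIcc (hsub hz))))
    (hdiv.mono_set (uIcc_subset_uIcc_left (Icc_subset_uIcc (hsub hy))))
  linarith [log_sub_log_sub_integral_div_le hf hf_nonneg hS hpos (hsub hy) (hsub hz) hyz]

theorem integral_mul_log_sub_le (hf : IntervalIntegrable f volume a b)
    (hf_nonneg : ∀ x ∈ Icc a b, 0 ≤ f x)
    (hS : ∀ x ∈ Icc a b, ∀ y ∈ Icc a b, S x - S y = ∫ t in x..y, f t)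
    (hpos : ∀ x ∈ Icc a b, 0 < S x) (hab : a ≤ b) {w : ℝ → ℝ}
    (hw : IntervalIntegrable w volume a b) (hw_nonneg : ∀ x ∈ Icc a b, 0 ≤ w x)
    {c : ℝ} (hc : 0 < c) (hcS : c ≤ S a) :
    ∫ x in a..b, w x * (log c - log (S x)) ≤ ∫ x in a..b, f x / S x * ∫ y in x..b, w y := by
  have hdiv := intervalIntegrable_div_of_sub_eq_integral hf hS hpos hab
  rw [← integral_mul_primitive_eq_integral_mul_tail hab hw hdiv]
  refine integral_mono_on hab (hw.mul_continuousOn ?_)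
    (hw.mul_continuousOn (continuousOn_primitive_interval' hdiv left_mem_uIcc)) fun x hx => ?_
  · rw [uIcc_of_le hab]
    exact continuousOn_const.sub
      ((continuousOn_of_sub_eq_integral hf hS).log fun x hx => (hpos x hx).ne')
  · refine mul_le_mul_of_nonneg_left ?_ (hw_nonneg x hx)
    linarith [log_le_log hc hcS, log_sub_log_le_integral_div hf hf_nonneg hS hpos hx]

theorem integral_mul_log_sub_le_integral_mul_integral_Ioi (hf : IntervalIntegrable f volume a b)
    (hf_nonneg : ∀ x ∈ Icc a b, 0 ≤ f x)
    (hS : ∀ x ∈ Icc a b, ∀ y ∈ Icc a b, S x - S y = ∫ t in x..y, f t)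
    (hpos : ∀ x ∈ Icc a b, 0 < S x) (hab : a ≤ b) {w : ℝ → ℝ}
    (hw : IntegrableOn w (Ioi a)) (hw_nonneg : ∀ x ∈ Ici a, 0 ≤ w x)
    (htail : IntervalIntegrable (fun x => f x / S x * ∫ y in Ioi x, w y) volume a b)
    {c : ℝ} (hc : 0 < c) (hcS : c ≤ S a) :
    ∫ x in a..b, w x * (log c - log (S x))
      ≤ ∫ x in a..b, f x / S x * ∫ y in Ioi x, w y := by
  have hw' : IntervalIntegrable w volume a b :=
    (intervalIntegrable_iff_integrableOn_Ioc_of_le hab).2 (hw.mono_set Ioc_subset_Ioi_self)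
  refine (integral_mul_log_sub_le hf hf_nonneg hS hpos hab hw' (fun x hx => hw_nonneg x hx.1)
    hc hcS).trans (integral_mono_on hab ?_ htail fun x hx => ?_)
  · exact (intervalIntegrable_div_of_sub_eq_integral hf hS hpos hab).mul_continuousOn
      (continuousOn_primitive_interval_left ((intervalIntegrable_iff' (by finiteness)).1 hw'))
  · exact mul_le_mul_of_nonneg_left (intervalIntegral_le_integral_Ioi hx.2
      (hw.mono_set (Ioi_subset_Ioi hx.1)) fun y hy => hw_nonneg y (hx.1.trans hy.le))
      (div_nonneg (hf_nonneg x hx) (hpos x hx).le)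

end Survival

theorem neg_integral_mul_div_mul_log_div {φ S : ℝ → ℝ} {a b c : ℝ}
    (hS : ∀ x ∈ uIcc a b, S x ≠ 0) (hc : c ≠ 0) :
    -∫ x in a..b, φ x * (S x / c) * log (S x / c)
      = (∫ x in a..b, φ x * S x * (log c - log (S x))) / c := by
  rw [← intervalIntegral.integral_neg, ← intervalIntegral.integral_div]
  refine integral_congr fun x hx => ?_
  simp only [log_div (hS x hx) hc]
  field_simp
  ring

theorem iwcre_upper_bound_general
    (f φ F Fbar ηbar : ℝ → ℝ)
    (hf_nonneg : ∀ x, 0 ≤ f x)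
    (hφ_nonneg : ∀ x, 0 ≤ φ x)
    (hF : ∀ x, F x = ∫ s in (0:ℝ)..x, f s)
    (hFbar : ∀ x, Fbar x = 1 - F x)
    (hFbar_pos : ∀ x, 0 ≤ x → 0 < Fbar x)
    (hηbar : ∀ x, 0 ≤ x → ηbar x = (1 / Fbar x) * ∫ y in Set.Ioi x, φ y * Fbar y)
    (t₁ t₂ : ℝ) (ht₁ : 0 ≤ t₁) (ht : t₁ < t₂)
    (hF12 : F t₁ < F t₂)
    (hi2 : IntervalIntegrable (fun x => ηbar x * f x) volume t₁ t₂)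
    (hi3 : ∀ x, 0 ≤ x → IntegrableOn (fun y => φ y * Fbar y) (Set.Ioi x) volume) :
    -∫ x in t₁..t₂, φ x * (Fbar x / (Fbar t₁ - Fbar t₂)) *
        Real.log (Fbar x / (Fbar t₁ - Fbar t₂))
      ≤ (∫ x in t₁..t₂, ηbar x * f x) / (F t₂ - F t₁) := by
  have hΔ : Fbar t₁ - Fbar t₂ = F t₂ - F t₁ := by rw [hFbar, hFbar]; ring
  have hpos : ∀ x ∈ Icc t₁ t₂, 0 < Fbar x := fun x hx => hFbar_pos x (ht₁.trans hx.1)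
  have hf : IntervalIntegrable f volume 0 t₂ :=
    intervalIntegrable_of_integral_lt_integral ht₁ (fun x _ => hf_nonneg x)
      (by rwa [← hF, ← hF])
  have hS : ∀ x ∈ Icc t₁ t₂, ∀ y ∈ Icc t₁ t₂,
      Fbar x - Fbar y = ∫ t in x..y, f t :=
    fun x hx y hy => sub_eq_integral_of_eq_sub_primitive hf (fun x => by rw [hFbar, hF]) x
      (Icc_subset_Icc_left ht₁ hx) y (Icc_subset_Icc_left ht₁ hy)
  have hf₁₂ : IntervalIntegrable f volume t₁ t₂ :=
    hf.mono_set (by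
      simp only [uIcc_of_le ht.le, uIcc_of_le (ht₁.trans ht.le), Icc_subset_Icc_left ht₁])
  have hη : EqOn (fun x => ηbar x * f x)
      (fun x => f x / Fbar x * ∫ y in Ioi x, φ y * Fbar y) (uIcc t₁ t₂) := fun x hx => by
    rw [uIcc_of_le ht.le] at hx
    simp only [hηbar x (ht₁.trans hx.1)]
    ring
  have hcore := integral_mul_log_sub_le_integral_mul_integral_Ioi hf₁₂ (fun x _ => hf_nonneg x)
    hS hpos ht.le (hi3 t₁ ht₁)
    (fun x hx => mul_nonneg (hφ_nonneg x) (hFbar_pos x (ht₁.trans hx)).le)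
    (hi2.congr fun x hx => hη (uIoc_subset_uIcc hx))
    (c := Fbar t₁ - Fbar t₂) (by linarith) (by linarith [hpos t₂ (right_mem_Icc.2 ht.le)])
  rw [neg_integral_mul_div_mul_log_div (fun x hx => (hpos x (uIcc_of_le ht.le ▸ hx)).ne')
    (by linarith), ← hΔ, integral_congr hη]
  exact div_le_div_of_nonneg_right hcore (by linarith)

/-- Residual analogue of Theorem 2.2: upper bound for the IWCRE by the conditional
expectation of η̄(X) = (1/F̄(X))·∫_X^∞ φ(y)·F̄(y) dy given t₁ ≤ X ≤ t₂. -/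
theorem iwcre_upper_bound
    (f φ F Fbar ηbar : ℝ → ℝ)
    (hf_meas : Measurable f) (hf_nonneg : ∀ x, 0 ≤ f x)
    (hφ_meas : Measurable φ) (hφ_nonneg : ∀ x, 0 ≤ φ x)
    (hF : ∀ x, F x = ∫ s in (0:ℝ)..x, f s)
    (hFbar : ∀ x, Fbar x = 1 - F x)
    (hFbar_pos : ∀ x, 0 ≤ x → 0 < Fbar x)
    (hηbar : ∀ x, 0 ≤ x → ηbar x = (1 / Fbar x) * ∫ y in Set.Ioi x, φ y * Fbar y)
    (t₁ t₂ : ℝ) (ht₁ : 0 ≤ t₁) (ht : t₁ < t₂)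
    (hF12 : F t₁ < F t₂)
    (hi1 : IntervalIntegrable
      (fun x => φ x * (Fbar x / (Fbar t₁ - Fbar t₂)) *
        Real.log (Fbar x / (Fbar t₁ - Fbar t₂))) volume t₁ t₂)
    (hi2 : IntervalIntegrable (fun x => ηbar x * f x) volume t₁ t₂)
    (hi3 : ∀ x, 0 ≤ x → IntegrableOn (fun y => φ y * Fbar y) (Set.Ioi x) volume) :
    -∫ x in t₁..t₂, φ x * (Fbar x / (Fbar t₁ - Fbar t₂)) *
        Real.log (Fbar x / (Fbar t₁ - Fbar t₂))
      ≤ (∫ x in t₁..t₂, ηbar x * f x) / (F t₂ - F t₁) :=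
  iwcre_upper_bound_general f φ F Fbar ηbar hf_nonneg hφ_nonneg hF hFbar hFbar_pos hηbar t₁ t₂ ht₁
    ht hF12 hi2 hi3
end
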